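/- For 0 < q < 1, the infimum over positive integers M of d(M)² / (∑_{k=0}^{M} d(k)²) equals 1 - q², where d(n) = [n+1]_q. -/

import Mathlib

noncomputable def qnum (q : ℝ) (n : ℕ) : ℝ := (q⁻¹ ^ n - q ^ n) / (q⁻¹ - q)

noncomputable def d (q : ℝ) (n : ℕ) : ℝ := qnum q (n + 1)

variable {q : ℝ}

lemma aux_hinv (hq : 0 < q) (hq1 : q < 1) : 1 < q⁻¹ := by
  have := mul_inv_cancel₀ hq.ne'
  nlinarith [inv_pos.mpr hq]

lemma aux_dpos (hq : 0 < q) (hq1 : q < 1) (n : ℕ) : 0 < d q n := by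
  have h2 : q ^ (n+1) < 1 := pow_lt_one₀ hq.le hq1 (by omega)
  have h3 : (1:ℝ) ≤ q⁻¹ ^ (n+1) := one_le_pow₀ (aux_hinv hq hq1).le
  exact div_pos (by linarith) (by linarith [aux_hinv hq hq1])

lemma aux_dform (hq : 0 < q) (hq1 : q < 1) (n : ℕ) :
    d q n = (1 - q ^ (2*n+2)) / (q ^ n * (1 - q ^ 2)) := by
  have hq0 : q ≠ 0 := hq.ne'
  have h1 : (1:ℝ) - q ^ 2 ≠ 0 := by nlinarith
  unfold d qnum
  rw [div_eq_div_iff (by linarith [aux_hinv hq hq1]) (by positivity)]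
  field_simp
  have e : q ^ n * q⁻¹ ^ n = 1 := by rw [← mul_pow, mul_inv_cancel₀ hq0, one_pow]
  have e2 : q * q⁻¹ = 1 := mul_inv_cancel₀ hq0
  linear_combination (q * q⁻¹) * e + e2

lemma aux_dle (hq : 0 < q) (hq1 : q < 1) (k j : ℕ) : d q k ≤ q ^ j * d q (k + j) := by
  have hq0 : q ≠ 0 := hq.ne'
  have h1 : (1:ℝ) - q ^ 2 ≠ 0 := by nlinarith
  have key : q ^ j * d q (k + j) - d q k
      = (q ^ (k+2) - q ^ (k+2*j+2)) / (1 - q ^ 2) := by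
    rw [aux_dform hq hq1, aux_dform hq hq1]
    field_simp
    ring
  have hp : q ^ (k+2*j+2) ≤ q ^ (k+2) :=
    pow_le_pow_of_le_one hq.le hq1.le (by omega)
  have h2 := div_nonneg (sub_nonneg.mpr hp) (by nlinarith : (0:ℝ) ≤ 1 - q ^ 2)
  linarith [key, h2]

lemma aux_dge (hq : 0 < q) (hq1 : q < 1) (k j : ℕ) :
    (q ^ j - q ^ (k + j + 1)) * d q (k + j) ≤ d q k := by
  have hq0 : q ≠ 0 := hq.ne'
  have h1 : (1:ℝ) - q ^ 2 ≠ 0 := by nlinarith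
  have key : d q k - (q ^ j - q ^ (k + j + 1)) * d q (k + j)
      = (q * (1 - q ^ (k+1)) * (1 + q ^ (k+2*j+1))) / (1 - q ^ 2) := by
    rw [aux_dform hq hq1, aux_dform hq hq1]
    field_simp
    ring
  have h2 : q ^ (k+1) ≤ 1 := pow_le_one₀ hq.le hq1.le
  have h4 : (0:ℝ) ≤ 1 + q ^ (k+2*j+1) := by positivity
  have h3 := div_nonneg (mul_nonneg (mul_nonneg hq.le (by linarith : (0:ℝ) ≤ 1 - q ^ (k+1))) h4)
    (by nlinarith : (0:ℝ) ≤ 1 - q ^ 2)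
  linarith [key, h3]

lemma aux_sum_upper (hq : 0 < q) (hq1 : q < 1) (M : ℕ) :
    (1 - q ^ 2) * ∑ k ∈ Finset.range (M + 1), d q k ^ 2 ≤ d q M ^ 2 := by
  have h2pos : (0:ℝ) < 1 - q ^ 2 := by nlinarith
  have step : ∀ k ∈ Finset.range (M + 1), d q k ^ 2 ≤ (q ^ 2) ^ (M - k) * d q M ^ 2 := by
    intro k hk
    have hkM : k ≤ M := by simpa [Nat.lt_succ_iff] using hk
    have h := aux_dle hq hq1 k (M - k)
    rw [Nat.add_sub_cancel' hkM] at h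
    have h0 : 0 ≤ d q k := (aux_dpos hq hq1 k).le
    calc d q k ^ 2 ≤ (q ^ (M - k) * d q M) ^ 2 := pow_le_pow_left₀ h0 h 2
      _ = (q ^ 2) ^ (M - k) * d q M ^ 2 := by rw [mul_pow, ← pow_right_comm]
  have h1 : ∑ k ∈ Finset.range (M + 1), d q k ^ 2
      ≤ (∑ k ∈ Finset.range (M + 1), (q ^ 2) ^ (M - k)) * d q M ^ 2 := by
    rw [Finset.sum_mul]
    exact Finset.sum_le_sum step
  have h3 : ∑ k ∈ Finset.range (M + 1), (q ^ 2) ^ (M - k)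
      = ∑ j ∈ Finset.range (M + 1), (q ^ 2) ^ j := by
    have := Finset.sum_range_reflect (fun j => (q ^ 2) ^ j) (M + 1)
    simpa using this
  have hgeom : (1 - q ^ 2) * ∑ j ∈ Finset.range (M + 1), (q ^ 2) ^ j = 1 - (q ^ 2) ^ (M + 1) := by
    have hne : (q:ℝ) ^ 2 ≠ 1 := by nlinarith
    have hne' : q ^ 2 - 1 ≠ 0 := by nlinarith
    rw [geom_sum_eq hne]
    field_simp
    ring
  have hp : (0:ℝ) ≤ (q ^ 2) ^ (M + 1) := by positivity
  have hd : (0:ℝ) ≤ d q M ^ 2 := sq_nonneg _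
  calc (1 - q ^ 2) * ∑ k ∈ Finset.range (M + 1), d q k ^ 2
      ≤ (1 - q ^ 2) * ((∑ k ∈ Finset.range (M + 1), (q ^ 2) ^ (M - k)) * d q M ^ 2) :=
        mul_le_mul_of_nonneg_left h1 h2pos.le
    _ = ((1 - q ^ 2) * ∑ j ∈ Finset.range (M + 1), (q ^ 2) ^ j) * d q M ^ 2 := by rw [h3]; ring
    _ = (1 - (q ^ 2) ^ (M + 1)) * d q M ^ 2 := by rw [hgeom]
    _ ≤ d q M ^ 2 := by nlinarith

lemma aux_sum_lower (hq : 0 < q) (hq1 : q < 1) (M : ℕ) :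
    ((1 - (q ^ 2) ^ (M + 1)) / (1 - q ^ 2) - 2 * q ^ (M + 1) / (1 - q)) * d q M ^ 2
      ≤ ∑ k ∈ Finset.range (M + 1), d q k ^ 2 := by
  have h2pos : (0:ℝ) < 1 - q ^ 2 := by nlinarith
  have h1pos : (0:ℝ) < 1 - q := by linarith
  have step : ∀ k ∈ Finset.range (M + 1),
      (q ^ (M - k) - q ^ (M + 1)) ^ 2 * d q M ^ 2 ≤ d q k ^ 2 := by
    intro k hk
    have hkM : k ≤ M := by simpa [Nat.lt_succ_iff] using hk
    have h := aux_dge hq hq1 k (M - k)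
    rw [Nat.add_sub_cancel' hkM] at h
    have hnn : (0:ℝ) ≤ q ^ (M - k) - q ^ (M + 1) :=
      sub_nonneg.mpr (pow_le_pow_of_le_one hq.le hq1.le (by omega))
    have h0 : 0 ≤ (q ^ (M - k) - q ^ (M + 1)) * d q M :=
      mul_nonneg hnn (aux_dpos hq hq1 M).le
    calc (q ^ (M - k) - q ^ (M + 1)) ^ 2 * d q M ^ 2
        = ((q ^ (M - k) - q ^ (M + 1)) * d q M) ^ 2 := by rw [mul_pow]
      _ ≤ d q k ^ 2 := pow_le_pow_left₀ h0 h 2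
  have h1 : (∑ k ∈ Finset.range (M + 1), (q ^ (M - k) - q ^ (M + 1)) ^ 2) * d q M ^ 2
      ≤ ∑ k ∈ Finset.range (M + 1), d q k ^ 2 := by
    rw [Finset.sum_mul]
    exact Finset.sum_le_sum step
  have h3 : ∑ k ∈ Finset.range (M + 1), (q ^ (M - k) - q ^ (M + 1)) ^ 2
      = ∑ j ∈ Finset.range (M + 1), (q ^ j - q ^ (M + 1)) ^ 2 := by
    have := Finset.sum_range_reflect (fun j => (q ^ j - q ^ (M + 1)) ^ 2) (M + 1)
    simpa using this
  have hpt : ∀ j ∈ Finset.range (M + 1),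
      (q ^ 2) ^ j - 2 * q ^ (M + 1) * q ^ j ≤ (q ^ j - q ^ (M + 1)) ^ 2 := by
    intro j _
    have e : (q ^ 2) ^ j = (q ^ j) ^ 2 := pow_right_comm q 2 j
    nlinarith [sq_nonneg (q ^ (M + 1))]
  have h4 : ∑ j ∈ Finset.range (M + 1), ((q ^ 2) ^ j - 2 * q ^ (M + 1) * q ^ j)
      ≤ ∑ j ∈ Finset.range (M + 1), (q ^ j - q ^ (M + 1)) ^ 2 := Finset.sum_le_sum hpt
  have h5 : ∑ j ∈ Finset.range (M + 1), ((q ^ 2) ^ j - 2 * q ^ (M + 1) * q ^ j)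
      = (∑ j ∈ Finset.range (M + 1), (q ^ 2) ^ j)
        - 2 * q ^ (M + 1) * ∑ j ∈ Finset.range (M + 1), q ^ j := by
    rw [Finset.sum_sub_distrib, ← Finset.mul_sum]
  have g1 : ∑ j ∈ Finset.range (M + 1), (q ^ 2) ^ j = (1 - (q ^ 2) ^ (M + 1)) / (1 - q ^ 2) := by
    have hne : (q:ℝ) ^ 2 ≠ 1 := by nlinarith
    rw [geom_sum_eq hne]
    rw [div_eq_div_iff (by nlinarith) (by nlinarith)]
    ring
  have g2 : ∑ j ∈ Finset.range (M + 1), q ^ j = (1 - q ^ (M + 1)) / (1 - q) := by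
    rw [geom_sum_eq hq1.ne]
    rw [div_eq_div_iff (by nlinarith) (by nlinarith)]
    ring
  have hple : q ^ (M + 1) ≤ 1 := pow_le_one₀ hq.le hq1.le
  have hpnn : (0:ℝ) ≤ q ^ (M + 1) := by positivity
  have h6 : 2 * q ^ (M + 1) * ((1 - q ^ (M + 1)) / (1 - q)) ≤ 2 * q ^ (M + 1) / (1 - q) := by
    have hnum : 2 * q ^ (M + 1) * (1 - q ^ (M + 1)) ≤ 2 * q ^ (M + 1) := by nlinarith
    calc 2 * q ^ (M + 1) * ((1 - q ^ (M + 1)) / (1 - q))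
        = (2 * q ^ (M + 1) * (1 - q ^ (M + 1))) / (1 - q) := by ring
      _ ≤ 2 * q ^ (M + 1) / (1 - q) := by gcongr
  have hscalar : (1 - (q ^ 2) ^ (M + 1)) / (1 - q ^ 2) - 2 * q ^ (M + 1) / (1 - q)
      ≤ ∑ j ∈ Finset.range (M + 1), (q ^ j - q ^ (M + 1)) ^ 2 := by
    rw [g1, g2] at h5
    linarith [h4, h5, h6]
  calc ((1 - (q ^ 2) ^ (M + 1)) / (1 - q ^ 2) - 2 * q ^ (M + 1) / (1 - q)) * d q M ^ 2
      ≤ (∑ j ∈ Finset.range (M + 1), (q ^ j - q ^ (M + 1)) ^ 2) * d q M ^ 2 :=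
        mul_le_mul_of_nonneg_right hscalar (sq_nonneg _)
    _ ≤ ∑ k ∈ Finset.range (M + 1), d q k ^ 2 := by rw [← h3]; exact h1

open Filter Topology in
theorem stmt_8 (q : ℝ) (hq : 0 < q) (hq1 : q < 1) :
    sInf {x : ℝ | ∃ M : ℕ, 1 ≤ M ∧
        x = d q M ^ 2 / (∑ k ∈ Finset.range (M + 1), d q k ^ 2)} = 1 - q ^ 2 := by
  have h2pos : (0:ℝ) < 1 - q ^ 2 := by nlinarith
  have h1pos : (0:ℝ) < 1 - q := by linarith
  set S := {x : ℝ | ∃ M : ℕ, 1 ≤ M ∧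
      x = d q M ^ 2 / (∑ k ∈ Finset.range (M + 1), d q k ^ 2)} with hS
  have hSpos : ∀ M : ℕ, 0 < ∑ k ∈ Finset.range (M + 1), d q k ^ 2 := fun M =>
    Finset.sum_pos (fun k _ => pow_pos (aux_dpos hq hq1 k) 2) ⟨0, by simp⟩
  have hlb : ∀ x ∈ S, 1 - q ^ 2 ≤ x := by
    rintro x ⟨M, hM, rfl⟩
    rw [le_div_iff₀ (hSpos M)]
    exact aux_sum_upper hq hq1 M
  have hne : S.Nonempty := ⟨_, 1, le_refl 1, rfl⟩
  have hbdd : BddBelow S := ⟨1 - q ^ 2, hlb⟩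
  refine le_antisymm ?_ (le_csInf hne hlb)
  -- tendsto facts
  have hp : Tendsto (fun M : ℕ => q ^ (M + 1)) atTop (𝓝 0) := by
    have := (tendsto_pow_atTop_nhds_zero_of_lt_one hq.le hq1).comp (tendsto_add_atTop_nat 1)
    exact this
  have hp2 : Tendsto (fun M : ℕ => (q ^ 2) ^ (M + 1)) atTop (𝓝 0) := by
    have := (tendsto_pow_atTop_nhds_zero_of_lt_one (by positivity) (by nlinarith : q ^ 2 < 1)).comp
      (tendsto_add_atTop_nat 1)
    exact this
  set h : ℕ → ℝ := fun M => (1 - (q ^ 2) ^ (M + 1)) / (1 - q ^ 2) - 2 * q ^ (M + 1) / (1 - q)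
    with hh
  have htendh : Tendsto h atTop (𝓝 ((1:ℝ) / (1 - q ^ 2))) := by
    have t1 : Tendsto (fun M : ℕ => (1 - (q ^ 2) ^ (M + 1)) / (1 - q ^ 2)) atTop
        (𝓝 ((1 - 0) / (1 - q ^ 2))) := (tendsto_const_nhds.sub hp2).div_const _
    have t2 : Tendsto (fun M : ℕ => 2 * q ^ (M + 1) / (1 - q)) atTop
        (𝓝 (2 * 0 / (1 - q))) := (hp.const_mul 2).div_const _
    have := t1.sub t2
    simpa using this
  have htendinv : Tendsto (fun M => (h M)⁻¹) atTop (𝓝 (1 - q ^ 2)) := by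
    have := htendh.inv₀ (by positivity)
    simpa using this
  refine ge_of_tendsto htendinv ?_
  have hev : ∀ᶠ M : ℕ in atTop, 0 < h M :=
    htendh.eventually (eventually_gt_nhds (by positivity))
  filter_upwards [hev, eventually_ge_atTop 1] with M hhM hM1
  have hmem : d q M ^ 2 / (∑ k ∈ Finset.range (M + 1), d q k ^ 2) ∈ S := ⟨M, hM1, rfl⟩
  refine le_trans (csInf_le hbdd hmem) ?_
  have hlow := aux_sum_lower hq hq1 M
  have hdpos : 0 < d q M ^ 2 := pow_pos (aux_dpos hq hq1 M) 2
  calc d q M ^ 2 / (∑ k ∈ Finset.range (M + 1), d q k ^ 2)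
      ≤ d q M ^ 2 / (h M * d q M ^ 2) := by
        apply div_le_div_of_nonneg_left hdpos.le (by positivity) hlow
    _ = (h M)⁻¹ := by rw [mul_comm, ← div_div, div_self hdpos.ne', one_div]
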